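/- Let M = ℝ² \ {(0,0)} be two-dimensional Minkowski spacetime with a point removed. Then M is reflecting: for all points p, q ∈ M, I⁻_M(p) ⊆ I⁻_M(q) if and only if I⁺_M(q) ⊆ I⁺_M(p). (Together with distinguishability, this shows that Minkowski spacetime with a point removed is causally continuous.) -/

import Mathlib

open Set Filter

/-- A future-directed timelike curve `γ : [0,1] → ℝ²` (with coordinates `(t, x)`),
given together with its derivative `γ'`: `γ` is differentiable on `[0,1]` and the
derivative `γ' s = (t'(s), x'(s))` satisfies `t'(s) > |x'(s)|` for every `s ∈ [0,1]`. -/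
def IsFDTimelike (γ γ' : ℝ → ℝ × ℝ) : Prop :=
  ∀ s ∈ Set.Icc (0:ℝ) 1,
    HasDerivWithinAt γ (γ' s) (Set.Icc (0:ℝ) 1) s ∧ |(γ' s).2| < (γ' s).1

/-- A future-directed causal curve `γ : [0,1] → ℝ²`, given together with its
derivative `γ'`: `γ` is differentiable on `[0,1]` and the derivative
`γ' s = (t'(s), x'(s))` satisfies `t'(s) ≥ |x'(s)|` and `γ' s ≠ 0` for every `s ∈ [0,1]`. -/
def IsFDCausal (γ γ' : ℝ → ℝ × ℝ) : Prop :=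
  ∀ s ∈ Set.Icc (0:ℝ) 1,
    HasDerivWithinAt γ (γ' s) (Set.Icc (0:ℝ) 1) s ∧ |(γ' s).2| ≤ (γ' s).1 ∧ γ' s ≠ 0

/-- The chronological future of `p` relative to `M ⊆ ℝ²`: points of `M` joined to `p`
by a future-directed timelike curve whose image lies in `M`. -/
def Iplus (M : Set (ℝ × ℝ)) (p : ℝ × ℝ) : Set (ℝ × ℝ) :=
  {q | q ∈ M ∧ ∃ γ γ' : ℝ → ℝ × ℝ, IsFDTimelike γ γ' ∧ γ 0 = p ∧ γ 1 = q ∧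
    ∀ s ∈ Set.Icc (0:ℝ) 1, γ s ∈ M}

/-- The chronological past of `p` relative to `M ⊆ ℝ²`. -/
def Iminus (M : Set (ℝ × ℝ)) (p : ℝ × ℝ) : Set (ℝ × ℝ) :=
  {q | q ∈ M ∧ ∃ γ γ' : ℝ → ℝ × ℝ, IsFDTimelike γ γ' ∧ γ 0 = q ∧ γ 1 = p ∧
    ∀ s ∈ Set.Icc (0:ℝ) 1, γ s ∈ M}

/-- The causal future of `p` relative to `M ⊆ ℝ²`: `{p}` together with the points of `M`
joined to `p` by a future-directed causal curve whose image lies in `M`. -/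
def Jplus (M : Set (ℝ × ℝ)) (p : ℝ × ℝ) : Set (ℝ × ℝ) :=
  {p} ∪ {q | q ∈ M ∧ ∃ γ γ' : ℝ → ℝ × ℝ, IsFDCausal γ γ' ∧ γ 0 = p ∧ γ 1 = q ∧
    ∀ s ∈ Set.Icc (0:ℝ) 1, γ s ∈ M}

/-- Two-dimensional Minkowski spacetime with the point `(0,0)` removed. -/
def Mdel : Set (ℝ × ℝ) := {((0:ℝ), (0:ℝ))}ᶜ

lemma mem_Mdel {u : ℝ × ℝ} : u ∈ Mdel ↔ u ≠ ((0:ℝ), (0:ℝ)) := by simp [Mdel]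

lemma timelike_mono {γ γ' : ℝ → ℝ × ℝ} (h : IsFDTimelike γ γ') {c : ℝ} (hc : |c| ≤ 1) :
    StrictMonoOn (fun s => (γ s).1 + c * (γ s).2) (Icc (0:ℝ) 1) := by
  have hd : ∀ s ∈ Icc (0:ℝ) 1, HasDerivWithinAt (fun s => (γ s).1 + c * (γ s).2)
      ((γ' s).1 + c * (γ' s).2) (Icc (0:ℝ) 1) s := by
    intro s hs
    have h1 : HasDerivWithinAt (fun s => (γ s).1) (γ' s).1 (Icc (0:ℝ) 1) s :=
      (ContinuousLinearMap.fst ℝ ℝ ℝ).hasFDerivAt.comp_hasDerivWithinAt s (h s hs).1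
    have h2 : HasDerivWithinAt (fun s => (γ s).2) (γ' s).2 (Icc (0:ℝ) 1) s :=
      (ContinuousLinearMap.snd ℝ ℝ ℝ).hasFDerivAt.comp_hasDerivWithinAt s (h s hs).1
    exact h1.add (h2.const_mul c)
  apply strictMonoOn_of_hasDerivWithinAt_pos (convex_Icc 0 1)
    (f' := fun s => (γ' s).1 + c * (γ' s).2)
  · exact fun s hs => (hd s hs).continuousWithinAt
  · exact fun s hs => ((hd s (interior_subset hs)).mono interior_subset)
  · intro s hs
    have h2 := (h s (interior_subset hs)).2
    have : |c * (γ' s).2| ≤ |(γ' s).2| := by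
      rw [abs_mul]
      exact mul_le_of_le_one_left (abs_nonneg _) hc
    have := neg_abs_le (c * (γ' s).2)
    linarith

lemma timelike_increment {γ γ' : ℝ → ℝ × ℝ} (h : IsFDTimelike γ γ') :
    |(γ 1).2 - (γ 0).2| < (γ 1).1 - (γ 0).1 := by
  have m0 : (0:ℝ) ∈ Icc (0:ℝ) 1 := by constructor <;> norm_num
  have m1 : (1:ℝ) ∈ Icc (0:ℝ) 1 := by constructor <;> norm_num
  have h1 := timelike_mono h (c := 1) (by norm_num) m0 m1 one_pos
  have h2 := timelike_mono h (c := -1) (by norm_num) m0 m1 one_pos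
  simp only at h1 h2
  rw [abs_lt]; constructor <;> linarith

/-- If `a` chronologically precedes `b` and both differ from the origin, there is a
future-directed timelike curve from `a` to `b` avoiding `(0,0)`. -/
lemma chron_curve {a b : ℝ × ℝ} (ha : a ≠ ((0:ℝ),(0:ℝ))) (hb : b ≠ ((0:ℝ),(0:ℝ)))
    (hab : |b.2 - a.2| < b.1 - a.1) :
    ∃ γ γ' : ℝ → ℝ × ℝ, IsFDTimelike γ γ' ∧ γ 0 = a ∧ γ 1 = b ∧
      ∀ s ∈ Set.Icc (0:ℝ) 1, γ s ≠ ((0:ℝ),(0:ℝ)) := by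
  set T := b.1 - a.1 with hT
  set X := b.2 - a.2 with hX
  set δ := (T - |X|) / 2 with hδ
  have hδpos : 0 < δ := by simp only [hδ]; linarith
  set G : ℝ → ℝ → ℝ × ℝ := fun ε s => (a.1 + s * T, a.2 + s * X + ε * (s * (1 - s))) with hG
  set G' : ℝ → ℝ → ℝ × ℝ := fun ε s => (T, X + ε * (1 - 2 * s)) with hG'
  have hTL : ∀ ε : ℝ, |ε| ≤ δ → IsFDTimelike (G ε) (G' ε) := by
    intro ε hε s hs
    constructor
    · have d1 : HasDerivAt (fun s : ℝ => a.1 + s * T) T s := by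
        simpa using ((hasDerivAt_id s).mul_const T).const_add a.1
      have d2 : HasDerivAt (fun s : ℝ => a.2 + s * X + ε * (s * (1 - s)))
          (X + ε * (1 - 2 * s)) s := by
        have dq : HasDerivAt (fun s : ℝ => s * (1 - s)) (1 - 2 * s) s := by
          have := (hasDerivAt_id s).mul ((hasDerivAt_id s).const_sub 1)
          exact this.congr_deriv (by simp only [id_eq]; ring)
        have := (((hasDerivAt_id s).mul_const X).const_add a.2).add (dq.const_mul ε)
        exact this.congr_deriv (by ring)
      exact (d1.prodMk d2).hasDerivWithinAt
    · show |X + ε * (1 - 2 * s)| < T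
      obtain ⟨hs0, hs1⟩ := hs
      have h12 : |1 - 2 * s| ≤ 1 := by rw [abs_le]; constructor <;> linarith
      have : |X + ε * (1 - 2 * s)| ≤ |X| + |ε| * |1 - 2 * s| := by
        calc |X + ε * (1 - 2 * s)| ≤ |X| + |ε * (1 - 2 * s)| := abs_add_le _ _
        _ = |X| + |ε| * |1 - 2 * s| := by rw [abs_mul]
      have h3 : |ε| * |1 - 2 * s| ≤ |ε| := mul_le_of_le_one_right (abs_nonneg _) h12
      have habs := abs_nonneg X
      simp only [hδ] at hε
      linarith
  have hend : ∀ ε : ℝ, G ε 0 = a ∧ G ε 1 = b := by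
    intro ε
    constructor
    · show ((a.1 + 0 * T, a.2 + 0 * X + ε * (0 * (1 - 0))) : ℝ × ℝ) = a
      simp
    · show ((a.1 + 1 * T, a.2 + 1 * X + ε * (1 * (1 - 1))) : ℝ × ℝ) = b
      simp [hT, hX]
  have key : ∀ ε₁ ε₂ s₁ s₂ : ℝ, ε₁ ≠ ε₂ → s₁ ∈ Icc (0:ℝ) 1 → s₂ ∈ Icc (0:ℝ) 1 →
      G ε₁ s₁ = ((0:ℝ),(0:ℝ)) → G ε₂ s₂ = ((0:ℝ),(0:ℝ)) → False := by
    intro ε₁ ε₂ s₁ s₂ hne hs₁ hs₂ h1 h2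
    have hTpos : 0 < T := lt_of_le_of_lt (abs_nonneg X) hab
    have e11 : a.1 + s₁ * T = 0 := congrArg Prod.fst h1
    have e21 : a.1 + s₂ * T = 0 := congrArg Prod.fst h2
    have hss : s₁ = s₂ := by
      have : s₁ * T = s₂ * T := by linarith
      exact mul_right_cancel₀ (ne_of_gt hTpos) this
    subst hss
    have e12 : a.2 + s₁ * X + ε₁ * (s₁ * (1 - s₁)) = 0 := congrArg Prod.snd h1
    have e22 : a.2 + s₁ * X + ε₂ * (s₁ * (1 - s₁)) = 0 := congrArg Prod.snd h2
    have hq : (ε₁ - ε₂) * (s₁ * (1 - s₁)) = 0 := by ring_nf; linarith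
    have : s₁ * (1 - s₁) = 0 := by
      rcases mul_eq_zero.mp hq with h | h
      · exact absurd (sub_eq_zero.mp h) hne
      · exact h
    rcases mul_eq_zero.mp this with h | h
    · subst h
      exact ha (((hend ε₁).1).symm.trans h1)
    · have : s₁ = 1 := by linarith
      subst this
      exact hb (((hend ε₁).2).symm.trans h1)
  by_cases hgood : ∀ s ∈ Icc (0:ℝ) 1, G δ s ≠ ((0:ℝ),(0:ℝ))
  · exact ⟨G δ, G' δ, hTL δ (by rw [abs_of_pos hδpos]), (hend δ).1, (hend δ).2, hgood⟩
  · push_neg at hgood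
    obtain ⟨s₁, hs₁, hz₁⟩ := hgood
    refine ⟨G (δ/2), G' (δ/2), hTL (δ/2) (by rw [abs_of_pos (by linarith)]; linarith),
      (hend (δ/2)).1, (hend (δ/2)).2, ?_⟩
    intro s hs hz
    exact key δ (δ/2) s₁ s (by linarith) hs₁ hs hz₁ hz

lemma mem_Iplus_iff {p u : ℝ × ℝ} (hp : p ≠ ((0:ℝ),(0:ℝ))) :
    u ∈ Iplus Mdel p ↔ u ≠ ((0:ℝ),(0:ℝ)) ∧ |u.2 - p.2| < u.1 - p.1 := by
  constructor
  · rintro ⟨hu, γ, γ', htl, h0, h1, -⟩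
    refine ⟨mem_Mdel.mp hu, ?_⟩
    have := timelike_increment htl
    rwa [h0, h1] at this
  · rintro ⟨hu, h⟩
    obtain ⟨γ, γ', h1, h2, h3, h4⟩ := chron_curve hp hu h
    exact ⟨mem_Mdel.mpr hu, γ, γ', h1, h2, h3, fun s hs => mem_Mdel.mpr (h4 s hs)⟩

lemma mem_Iminus_iff {p u : ℝ × ℝ} (hp : p ≠ ((0:ℝ),(0:ℝ))) :
    u ∈ Iminus Mdel p ↔ u ≠ ((0:ℝ),(0:ℝ)) ∧ |p.2 - u.2| < p.1 - u.1 := by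
  constructor
  · rintro ⟨hu, γ, γ', htl, h0, h1, -⟩
    refine ⟨mem_Mdel.mp hu, ?_⟩
    have := timelike_increment htl
    rwa [h0, h1] at this
  · rintro ⟨hu, h⟩
    obtain ⟨γ, γ', h1, h2, h3, h4⟩ := chron_curve hu hp h
    exact ⟨mem_Mdel.mpr hu, γ, γ', h1, h2, h3, fun s hs => mem_Mdel.mpr (h4 s hs)⟩

/-- `M = ℝ² \ {(0,0)}` is reflecting. -/
theorem stmt17 (p q : ℝ × ℝ) (hp : p ∈ Mdel) (hq : q ∈ Mdel) :
    Iminus Mdel p ⊆ Iminus Mdel q ↔ Iplus Mdel q ⊆ Iplus Mdel p := by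
  rw [mem_Mdel] at hp hq
  have key1 : Iminus Mdel p ⊆ Iminus Mdel q ↔ |q.2 - p.2| ≤ q.1 - p.1 := by
    constructor
    · intro h
      by_contra hc
      push_neg at hc
      set m := |q.2 - p.2| - (q.1 - p.1) with hm
      have hmpos : 0 < m := by linarith
      set e : ℝ := if 0 ≤ p.2 - q.2 then 1 else -1 with he
      set u : ℝ → ℝ × ℝ := fun s => (p.1 - s, p.2 + e * s / 2) with hu
      have habse : |e| = 1 := by
        simp only [he]; split <;> simp
      have hmemp : ∀ s : ℝ, 0 < s → u s ≠ ((0:ℝ),(0:ℝ)) → u s ∈ Iminus Mdel p := by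
        intro s hs hs0
        rw [mem_Iminus_iff hp]
        refine ⟨hs0, ?_⟩
        show |p.2 - (p.2 + e * s / 2)| < p.1 - (p.1 - s)
        have : |p.2 - (p.2 + e * s / 2)| = |e| * (s / 2) := by
          rw [show p.2 - (p.2 + e * s / 2) = -(e * (s/2)) by ring, abs_neg, abs_mul,
            abs_of_pos (by linarith : (0:ℝ) < s/2)]
        rw [this, habse]; linarith
      have hmemq : ∀ s : ℝ, 0 < s → s ≤ 2 * m → u s ∉ Iminus Mdel q := by
        intro s hs hsm hmem
        rw [mem_Iminus_iff hq] at hmem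
        have h2 := hmem.2
        have ht : q.1 - (u s).1 = q.1 - p.1 + s := by simp only [hu]; ring
        by_cases hsign : 0 ≤ p.2 - q.2
        · have he1 : e = 1 := by simp [he, hsign]
          have habsd : |q.2 - p.2| = p.2 - q.2 := by
            rw [abs_sub_comm, abs_of_nonneg hsign]
          have : -(q.2 - (u s).2) ≤ |q.2 - (u s).2| := neg_le_abs _
          have hx : -(q.2 - (u s).2) = (p.2 - q.2) + s / 2 := by
            simp only [hu, he1]; ring
          rw [ht] at h2
          rw [hx] at this
          rw [habsd] at hm
          linarith
        · push_neg at hsign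
          have he1 : e = -1 := by simp [he, not_le.mpr hsign]
          have habsd : |q.2 - p.2| = q.2 - p.2 := by
            rw [abs_of_nonneg (by linarith)]
          have hx : q.2 - (u s).2 = (q.2 - p.2) + s / 2 := by
            simp only [hu, he1]; ring
          rw [ht] at h2
          have hge : q.1 - p.1 + s ≤ q.2 - (u s).2 := by
            rw [hx]; rw [habsd] at hm; linarith
          linarith [le_trans hge (le_abs_self (q.2 - (u s).2))]
      -- choose s ∈ {2m, m} with u s ≠ (0,0)
      have hzero : ∀ s : ℝ, u s = ((0:ℝ),(0:ℝ)) → s = p.1 := by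
        intro s hs
        have : p.1 - s = 0 := congrArg Prod.fst hs
        linarith
      by_cases h1 : u (2 * m) = ((0:ℝ),(0:ℝ))
      · have h2 : u m ≠ ((0:ℝ),(0:ℝ)) := by
          intro h2
          have := hzero _ h1
          have := hzero _ h2
          linarith
        exact hmemq m hmpos (by linarith) (h (hmemp m hmpos h2))
      · exact hmemq (2*m) (by linarith) (le_refl _) (h (hmemp (2*m) (by linarith) h1))
    · intro h r hr
      rw [mem_Iminus_iff hp] at hr
      rw [mem_Iminus_iff hq]
      refine ⟨hr.1, ?_⟩
      have := abs_sub_le q.2 p.2 r.2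
      have := hr.2
      linarith
  have key2 : Iplus Mdel q ⊆ Iplus Mdel p ↔ |q.2 - p.2| ≤ q.1 - p.1 := by
    constructor
    · intro h
      by_contra hc
      push_neg at hc
      set m := |q.2 - p.2| - (q.1 - p.1) with hm
      have hmpos : 0 < m := by linarith
      set e : ℝ := if 0 ≤ q.2 - p.2 then 1 else -1 with he
      set u : ℝ → ℝ × ℝ := fun s => (q.1 + s, q.2 + e * s / 2) with hu
      have habse : |e| = 1 := by
        simp only [he]; split <;> simp
      have hmemq : ∀ s : ℝ, 0 < s → u s ≠ ((0:ℝ),(0:ℝ)) → u s ∈ Iplus Mdel q := by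
        intro s hs hs0
        rw [mem_Iplus_iff hq]
        refine ⟨hs0, ?_⟩
        show |(q.2 + e * s / 2) - q.2| < (q.1 + s) - q.1
        have : |(q.2 + e * s / 2) - q.2| = |e| * (s / 2) := by
          rw [show (q.2 + e * s / 2) - q.2 = e * (s/2) by ring, abs_mul,
            abs_of_pos (by linarith : (0:ℝ) < s/2)]
        rw [this, habse]; linarith
      have hmemp : ∀ s : ℝ, 0 < s → s ≤ 2 * m → u s ∉ Iplus Mdel p := by
        intro s hs hsm hmem
        rw [mem_Iplus_iff hp] at hmem
        have h2 := hmem.2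
        have ht : (u s).1 - p.1 = q.1 - p.1 + s := by simp only [hu]; ring
        by_cases hsign : 0 ≤ q.2 - p.2
        · have he1 : e = 1 := by simp [he, hsign]
          have habsd : |q.2 - p.2| = q.2 - p.2 := abs_of_nonneg hsign
          have hx : (u s).2 - p.2 = (q.2 - p.2) + s / 2 := by
            simp only [hu, he1]; ring
          rw [ht] at h2
          have hge : q.1 - p.1 + s ≤ (u s).2 - p.2 := by
            rw [hx]; rw [habsd] at hm; linarith
          linarith [le_trans hge (le_abs_self ((u s).2 - p.2))]
        · push_neg at hsign
          have he1 : e = -1 := by simp [he, not_le.mpr hsign]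
          have habsd : |q.2 - p.2| = p.2 - q.2 := by
            rw [abs_sub_comm, abs_of_nonneg (by linarith)]
          have : -((u s).2 - p.2) ≤ |(u s).2 - p.2| := neg_le_abs _
          have hx : -((u s).2 - p.2) = (p.2 - q.2) + s / 2 := by
            simp only [hu, he1]; ring
          rw [ht] at h2
          rw [hx] at this
          rw [habsd] at hm
          linarith
      have hzero : ∀ s : ℝ, u s = ((0:ℝ),(0:ℝ)) → s = -q.1 := by
        intro s hs
        have : q.1 + s = 0 := congrArg Prod.fst hs
        linarith
      by_cases h1 : u (2 * m) = ((0:ℝ),(0:ℝ))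
      · have h2 : u m ≠ ((0:ℝ),(0:ℝ)) := by
          intro h2
          have := hzero _ h1
          have := hzero _ h2
          linarith
        exact hmemp m hmpos (by linarith) (h (hmemq m hmpos h2))
      · exact hmemp (2*m) (by linarith) (le_refl _) (h (hmemq (2*m) (by linarith) h1))
    · intro h r hr
      rw [mem_Iplus_iff hq] at hr
      rw [mem_Iplus_iff hp]
      refine ⟨hr.1, ?_⟩
      have := abs_sub_le r.2 q.2 p.2
      have := hr.2
      linarith
  rw [key1, key2]
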